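/- arXiv:2008.04186 — 3 statements merged into one kernel-verified Lean document; each statement's English description precedes it below -/
import Mathlib

section
/- Let A be a finite alphabet and let k ≥ 1 be a natural number. If a word w over A is periodic with periods p_1, p_2, …, p_k (each p_i a positive integer with p_i ≤ |w|) and |w| ≥ p_1 + p_2 + ⋯ + p_k − gcd(p_1, p_2, …, p_k), then w is periodic with period gcd(p_1, p_2, …, p_k). -/
/-- A word `w` (a finite sequence over an alphabet) is periodic with period `p`
if `w_i = w_{i+p}` for every valid index, i.e. for all `i` with `i + p < |w|`
(0-indexed), the letters at positions `i` and `i + p` agree. -/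
def IsPeriodicWith {A : Type*} (w : List A) (p : ℕ) : Prop :=
  ∀ i : ℕ, ∀ h : i + p < w.length,
    w.get ⟨i, by omega⟩ = w.get ⟨i + p, h⟩

private lemma fw_chain {A : Type*} (f : ℕ → A) (n p : ℕ)
    (h : ∀ i, i + p < n → f i = f (i + p)) :
    ∀ d i, i + d * p < n → f i = f (i + d * p) := by
  intro d
  induction d with
  | zero => simp
  | succ d ih =>
    intro i hi
    have hdp : (d + 1) * p = d * p + p := by ring
    rw [hdp] at hi ⊢
    have h1 : i + p < n := by omega
    have := h i h1
    have h2 := ih (i + p) (by omega)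
    rw [this, h2]
    congr 1
    omega

private lemma fw_core {A : Type*} (f : ℕ → A) :
    ∀ N p q n, p + q ≤ N → 0 < q → q ≤ p →
      (∀ i, i + p < n → f i = f (i + p)) →
      (∀ i, i + q < n → f i = f (i + q)) →
      p + q - Nat.gcd p q ≤ n →
      ∀ i j, i < n → j < n → i % Nat.gcd p q = j % Nat.gcd p q → f i = f j := by
  intro N
  induction N with
  | zero => intro p q n hN hq hqp _ _ _ _ _ _ _ _; omega
  | succ N ih =>
    intro p q n hN hq hqp hp' hq' hn i j hi hj hij
    rcases eq_or_lt_of_le hqp with rfl | hlt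
    · -- q = p case
      rw [Nat.gcd_self] at hij hn
      -- WLOG i ≤ j
      have key : ∀ a b, a ≤ b → a < n → b < n → a % q = b % q → f a = f b := by
        intro a b hab ha hb h
        have hdvd : q ∣ b - a := (Nat.modEq_iff_dvd' hab).mp h
        obtain ⟨d, hd⟩ := hdvd
        rw [mul_comm] at hd
        have : b = a + d * q := by omega
        subst this
        exact fw_chain f n q hq' d a hb
      rcases le_total i j with h | h
      · exact key i j h hi hj hij
      · exact (key j i h hj hi hij.symm).symm
    · -- q < p case
      set g := Nat.gcd p q with hg
      have hgp : g ∣ p := Nat.gcd_dvd_left p q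
      have hgq : g ∣ q := Nat.gcd_dvd_right p q
      have hgpq : g ∣ p - q := Nat.dvd_sub hgp hgq
      have hgpos : 0 < g := Nat.gcd_pos_of_pos_right p hq
      have hgle : g ≤ p - q := Nat.le_of_dvd (by omega) hgpq
      have hgq' : g ≤ q := Nat.le_of_dvd hq hgq
      -- recursive hypotheses on the prefix of length n - q with periods p - q and q
      have hper1 : ∀ i, i + (p - q) < n - q → f i = f (i + (p - q)) := by
        intro x hx
        have hxp : x + p < n := by omega
        have := hp' x hxp
        have h2 := hq' (x + (p - q)) (by omega)
        rw [this, h2]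
        congr 1
        omega
      have hper2 : ∀ i, i + q < n - q → f i = f (i + q) := fun x hx => hq' x (by omega)
      have hgcd' : Nat.gcd (p - q) q = g := Nat.gcd_sub_self_left hqp
      have hlen' : (p - q) + q - Nat.gcd (p - q) q ≤ n - q := by rw [hgcd']; omega
      have H : ∀ a b, a < n - q → b < n - q → a % g = b % g → f a = f b := by
        rcases le_total q (p - q) with hord | hord
        · intro a b ha hb hab
          have := ih (p - q) q (n - q) (by omega) hq hord hper1 hper2 hlen' a b ha hb
          rw [hgcd'] at this; exact this hab
        · intro a b ha hb hab
          have hgcd'' : Nat.gcd q (p - q) = g := by rw [Nat.gcd_comm]; exact hgcd'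
          have := ih q (p - q) (n - q) (by omega) (by omega) hord hper2 hper1
            (by rw [hgcd'']; omega) a b ha hb
          rw [hgcd''] at this; exact this hab
      -- reduce any index below n - q by subtracting q once if needed
      have key : ∀ x, x < n → ∃ x', x' < n - q ∧ x' % g = x % g ∧ f x' = f x := by
        intro x hx
        by_cases hx' : x < n - q
        · exact ⟨x, hx', rfl, rfl⟩
        · have hxq : q ≤ x := by omega
          refine ⟨x - q, by omega, ?_, ?_⟩
          · obtain ⟨m, hm⟩ := hgq
            have hx2 : x = (x - q) + g * m := by omega
            conv_rhs => rw [hx2]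
            rw [Nat.add_mul_mod_self_left]
          · have := hq' (x - q) (by omega)
            rw [this]; congr 1; omega
      obtain ⟨i', hi1, hi2, hi3⟩ := key i hi
      obtain ⟨j', hj1, hj2, hj3⟩ := key j hj
      rw [← hi3, ← hj3]
      exact H i' j' hi1 hj1 (by omega)

private lemma fw_two {A : Type*} (f : ℕ → A) (p q n : ℕ) (hp : 0 < p) (hq : 0 < q)
    (hp' : ∀ i, i + p < n → f i = f (i + p))
    (hq' : ∀ i, i + q < n → f i = f (i + q))
    (hn : p + q - Nat.gcd p q ≤ n) :
    ∀ i, i + Nat.gcd p q < n → f i = f (i + Nat.gcd p q) := by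
  intro i hi
  have hmod : i % Nat.gcd p q = (i + Nat.gcd p q) % Nat.gcd p q :=
    (Nat.add_mod_right i _).symm
  rcases le_total q p with h | h
  · exact fw_core f (p + q) p q n le_rfl hq h hp' hq' hn i (i + Nat.gcd p q)
      (by omega) hi hmod
  · have hc : Nat.gcd q p = Nat.gcd p q := Nat.gcd_comm q p
    refine fw_core f (q + p) q p n le_rfl hp h hq' hp' (by rw [hc]; omega) i
      (i + Nat.gcd p q) (by omega) hi ?_
    rw [hc]; exact hmod

/-- Multi-period version over an arbitrary nonempty finset of indices. -/
private lemma fw_finset {A : Type*} {ι : Type*} (f : ℕ → A) (n : ℕ) (p : ι → ℕ)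
    (s : Finset ι) (hs : s.Nonempty) :
    (∀ i ∈ s, 0 < p i) → (∀ i ∈ s, p i ≤ n) →
    (∀ i ∈ s, ∀ x, x + p i < n → f x = f (x + p i)) →
    (∑ i ∈ s, p i) - s.gcd p ≤ n →
    ∀ x, x + s.gcd p < n → f x = f (x + s.gcd p) := by
  induction hs using Finset.Nonempty.cons_induction with
  | singleton a =>
    intro hpos hle hper hlen
    simpa [Finset.gcd_singleton] using hper a (Finset.mem_singleton_self a)
  | cons a s ha hs ih =>
    intro hpos hle hper hlen
    classical
    have hposs : ∀ i ∈ s, 0 < p i := fun i hi => hpos i (Finset.mem_cons_of_mem hi)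
    have hles : ∀ i ∈ s, p i ≤ n := fun i hi => hle i (Finset.mem_cons_of_mem hi)
    have hpers : ∀ i ∈ s, ∀ x, x + p i < n → f x = f (x + p i) :=
      fun i hi => hper i (Finset.mem_cons_of_mem hi)
    obtain ⟨b, hb⟩ := hs
    set g' := s.gcd p with hg'
    have hg'pos : 0 < g' := by
      rcases Nat.eq_zero_or_pos g' with h | h
      · rw [hg'] at h
        have := Finset.gcd_eq_zero_iff.mp h b hb
        have := hposs b hb
        omega
      · exact h
    have hgcons : (Finset.cons a s ha).gcd p = Nat.gcd (p a) g' := by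
      rw [Finset.cons_eq_insert, Finset.gcd_insert]; rfl
    have hgdvd : Nat.gcd (p a) g' ∣ g' := Nat.gcd_dvd_right _ _
    have hgle2 : Nat.gcd (p a) g' ≤ g' := Nat.le_of_dvd hg'pos hgdvd
    have hg'b : g' ∣ p b := Finset.gcd_dvd hb
    have hg'le : g' ≤ p b := Nat.le_of_dvd (hposs b hb) hg'b
    have hsum : p b ≤ ∑ i ∈ s, p i := Finset.single_le_sum (fun i _ => Nat.zero_le _) hb
    rw [Finset.sum_cons] at hlen
    -- apply IH to get period g'
    have hIH : ∀ x, x + g' < n → f x = f (x + g') := by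
      apply ih hposs hles hpers
      omega
    -- two-period Fine-Wilf for p a and g'
    have := fw_two f (p a) g' n (hpos a (Finset.mem_cons_self a s)) hg'pos
      (hper a (Finset.mem_cons_self a s)) hIH (by omega)
    simp only [hgcons]
    exact this

/-- **Fine–Wilf theorem (multi-period form).**
Let `A` be a finite alphabet and `k ≥ 1`. If a word `w` over `A` is periodic
with periods `p 1, …, p k` (each positive and at most `|w|`) and
`|w| ≥ p 1 + ⋯ + p k − gcd (p 1, …, p k)`, then `w` is periodic with period
`gcd (p 1, …, p k)`. -/
theorem fine_wilf {A : Type*} [Fintype A] (k : ℕ) (hk : 1 ≤ k)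
    (w : List A) (p : Fin k → ℕ)
    (hpos : ∀ i, 0 < p i) (hle : ∀ i, p i ≤ w.length)
    (hper : ∀ i, IsPeriodicWith w (p i))
    (hlen : (∑ i, p i) - Finset.univ.gcd p ≤ w.length) :
    IsPeriodicWith w (Finset.univ.gcd p) := by
  set f : ℕ → Option A := fun i => w[i]? with hf
  have huniv : (Finset.univ : Finset (Fin k)).Nonempty := by
    refine ⟨⟨0, by omega⟩, Finset.mem_univ _⟩
  have hper' : ∀ i ∈ Finset.univ, ∀ x, x + p i < w.length → f x = f (x + p i) := by
    intro i _ x hx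
    have h1 : x < w.length := by omega
    simp only [hf, List.getElem?_eq_getElem h1, List.getElem?_eq_getElem hx]
    exact congrArg some (hper i x hx)
  have key := fw_finset f w.length p Finset.univ huniv
    (fun i _ => hpos i) (fun i _ => hle i) hper' hlen
  intro x hx
  have h1 : x < w.length := by omega
  have := key x hx
  simp only [hf, List.getElem?_eq_getElem h1, List.getElem?_eq_getElem hx] at this
  simpa [List.get_eq_getElem] using this
end

section
/- Let A be a finite alphabet and p ≥ 1 a natural number. Let s_1, …, s_p, t_1, …, t_p, and w be words over A such that w = s_1 t_1 = s_2 t_2 = ⋯ = s_p t_p. Suppose there are two words s and t over A with |s| ≥ |w| and |t| ≥ |w| such that for every 1 ≤ i ≤ p, s_i is a suffix of s and t_i is a prefix of t. Then there exists a set of words B over A such that (1) B has cardinality at most 3, and (2) for every 1 ≤ i ≤ p, both s_i and t_i are concatenations of elements of B (i.e., s_i, t_i ∈ B*). -/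
/-!
If `|s i| ≤ |s j|`, then `s i` is a suffix of `s j` and `t j` a prefix of `t i`, so
`s i ++ t j` is a border of `w` and `w` has period `|s j| - |s i|`. With `k` and `K` the least
and the largest length of an `s i`, the middle factor `v = w[k, K)` therefore has, for every
cut `d = |s i| - k`, the two periods `d` and `|v| - d`. By Fine–Wilf, `gcd d |v|` is then a
period of `v`; the periods of `v` dividing `|v|` are closed under `gcd`, so the least of them,
`g`, divides every cut. Hence `v` is a power of `ρ = v[0, g)`, and every `s i` lies in
`w[0, k) ρ*` and every `t i` in `ρ* w[K, |w|)`, so `B = {w[0, k), ρ, w[K, |w|)}` works.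
-/

/-- `InStar B w` means that the word `w` belongs to `B*`, i.e. `w` is a
(finite, possibly empty) concatenation of elements of the set of words `B`. -/
def InStar {A : Type*} (B : Finset (List A)) (w : List A) : Prop :=
  ∃ l : List (List A), (∀ u ∈ l, u ∈ B) ∧ l.flatten = w

namespace List

variable {α : Type*}

theorem hasPeriod_length_of_eq_append {w c x e : List α} (hc : w = c ++ x) (he : w = x ++ e) :
    w.HasPeriod c.length := by
  have htake : w.take c.length = c := by rw [hc, take_left]
  rw [HasPeriod, htake]
  exact ⟨e, by rw [hc, append_assoc, ← he, ← hc]⟩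

theorem hasPeriod_sub_length_of_isSuffix_of_isPrefix {S T s₁ s₂ t₁ t₂ w : List α}
    (hs₁ : s₁ <:+ S) (hs₂ : s₂ <:+ S) (ht₁ : t₁ <+: T) (ht₂ : t₂ <+: T)
    (hw₁ : w = s₁ ++ t₁) (hw₂ : w = s₂ ++ t₂) (hlen : s₁.length ≤ s₂.length) :
    w.HasPeriod (s₂.length - s₁.length) := by
  obtain ⟨c, rfl⟩ := suffix_of_suffix_length_le hs₁ hs₂ hlen
  have htlen : t₂.length ≤ t₁.length := by
    have := congrArg length (hw₁.symm.trans hw₂)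
    simp only [length_append] at this
    omega
  obtain ⟨e, rfl⟩ := prefix_of_prefix_length_le ht₂ ht₁ htlen
  rw [length_append, Nat.add_sub_cancel]
  exact hasPeriod_length_of_eq_append (x := s₁ ++ t₂) (by rw [hw₂, append_assoc])
    (by rw [hw₁, append_assoc])

theorem HasPeriod.gcd_of_dvd_length {v : List α} {a b : ℕ} (ha : v.HasPeriod a)
    (hb : v.HasPeriod b) (hav : a ∣ v.length) (hbv : b ∣ v.length) :
    v.HasPeriod (a.gcd b) := by
  rcases Nat.eq_zero_or_pos v.length with hv | hv
  · exact hasPeriod_of_length_le v _ (by omega)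
  by_cases ha' : a = v.length
  · rwa [Nat.gcd_eq_right (ha' ▸ hbv)]
  by_cases hb' : b = v.length
  · rwa [Nat.gcd_eq_left (hb' ▸ hav)]
  have half {q : ℕ} (hq : q ∣ v.length) (hne : q ≠ v.length) : 2 * q ≤ v.length := by
    obtain ⟨c, hc⟩ := hq
    rcases c with _ | _ | c
    · omega
    · simp_all
    · rw [hc]; nlinarith
  exact ha.gcd hb (by have := half hav ha'; have := half hbv hb'; omega)

theorem HasPeriod.gcd_length {v : List α} {d : ℕ} (hd : d ≤ v.length) (h₁ : v.HasPeriod d)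
    (h₂ : v.HasPeriod (v.length - d)) : v.HasPeriod (d.gcd v.length) := by
  rw [← Nat.gcd_sub_self_right hd]
  exact h₁.gcd h₂ (by omega)

theorem exists_hasPeriod_dvd_forall_hasPeriod_dvd {v : List α} (hv : v ≠ []) :
    ∃ g, 0 < g ∧ g ∣ v.length ∧ v.HasPeriod g ∧
      ∀ q, q ∣ v.length → v.HasPeriod q → g ∣ q := by
  classical
  have hex : ∃ g, 0 < g ∧ g ∣ v.length ∧ v.HasPeriod g :=
    ⟨v.length, length_pos_iff.mpr hv, dvd_rfl, hasPeriod_of_length_le v _ le_rfl⟩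
  obtain ⟨hg₀, hgv, hg⟩ := Nat.find_spec hex
  refine ⟨Nat.find hex, hg₀, hgv, hg, fun q hqv hq => ?_⟩
  have hmin : Nat.find hex ≤ (Nat.find hex).gcd q :=
    Nat.find_min' hex ⟨Nat.gcd_pos_of_pos_left q hg₀, (Nat.gcd_dvd_left _ _).trans hgv,
      hg.gcd_of_dvd_length hq hgv hqv⟩
  rw [← Nat.gcd_eq_left_iff_dvd]
  exact le_antisymm (Nat.gcd_le_left q hg₀) hmin

theorem HasPeriod.eq_flatten_replicate_take {v : List α} {g n : ℕ} (h : v.HasPeriod g)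
    (hlen : v.length = n * g) : v = (replicate n (v.take g)).flatten := by
  induction n generalizing v with
  | zero => simpa using hlen
  | succ n ih =>
    have hu : (v.drop g).length = n * g := by rw [length_drop, hlen, Nat.succ_mul]; omega
    have hroot : replicate n ((v.drop g).take g) = replicate n (v.take g) := by
      rcases n with _ | n
      · rfl
      · have hpre : v.drop g = v.take (v.drop g).length := prefix_iff_eq_take.mp h.drop_prefix
        rw [hpre, take_take, min_eq_left (by rw [hu, Nat.succ_mul]; omega)]
    rw [replicate_succ, flatten_cons, ← hroot,
      ← ih (h.infix (drop_suffix g v).isInfix) hu, take_append_drop]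

theorem exists_forall_take_drop_eq_flatten_replicate (v : List α) :
    ∃ ρ : List α, ∀ d ≤ v.length, v.HasPeriod d → v.HasPeriod (v.length - d) →
      ∃ a b, v.take d = (replicate a ρ).flatten ∧ v.drop d = (replicate b ρ).flatten := by
  rcases eq_or_ne v [] with rfl | hv
  · exact ⟨[], fun d _ _ _ => ⟨0, 0, by simp, by simp⟩⟩
  obtain ⟨g, hg₀, ⟨n, hn⟩, hg, hmin⟩ := exists_hasPeriod_dvd_forall_hasPeriod_dvd hv
  refine ⟨v.take g, fun d hd h₁ h₂ => ?_⟩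
  obtain ⟨a, rfl⟩ := (hmin _ (Nat.gcd_dvd_right d _) (h₁.gcd_length hd h₂)).trans
    (Nat.gcd_dvd_left d _)
  have han : a ≤ n := Nat.le_of_mul_le_mul_left (hn ▸ hd) hg₀
  have hsplit :
      v = (replicate a (v.take g)).flatten ++ (replicate (n - a) (v.take g)).flatten := by
    rw [← flatten_append, ← replicate_add, Nat.add_sub_cancel' han,
      ← hg.eq_flatten_replicate_take (by rw [hn, mul_comm])]
  have hlen : ((replicate a (v.take g)).flatten).length = g * a := by
    have hgv : g ≤ v.length := Nat.le_of_dvd (length_pos_iff.mpr hv) ⟨n, hn⟩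
    simp only [length_flatten, map_replicate, length_take, sum_replicate, smul_eq_mul,
      min_eq_left hgv, mul_comm]
  refine ⟨a, n - a, ?_, ?_⟩
  · conv_lhs => rw [hsplit]
    exact take_left' hlen
  · conv_lhs => rw [hsplit]
    exact drop_left' hlen

theorem exists_forall_take_drop_eq (w : List α) {k K : ℕ} (hkK : k ≤ K) (hK : K ≤ w.length) :
    ∃ ρ : List α, ∀ j, k ≤ j → j ≤ K → w.HasPeriod (j - k) → w.HasPeriod (K - j) →
      ∃ a b, w.take j = w.take k ++ (replicate a ρ).flatten ∧
        w.drop j = (replicate b ρ).flatten ++ w.drop K := by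
  set v := (w.drop k).take (K - k) with hvdef
  have hv : w = w.take k ++ v ++ w.drop K := by
    have hdrop : w.drop K = (w.drop k).drop (K - k) := by rw [drop_drop, Nat.add_sub_cancel' hkK]
    rw [append_assoc, hdrop, take_append_drop, take_append_drop]
  have hvlen : v.length = K - k := by simp only [hvdef, length_take, length_drop]; omega
  have hvw : v <:+: w := ⟨_, _, hv.symm⟩
  obtain ⟨ρ, hρ⟩ := v.exists_forall_take_drop_eq_flatten_replicate
  refine ⟨ρ, fun j hkj hjK h₁ h₂ => ?_⟩
  obtain ⟨a, b, ha, hb⟩ := hρ (j - k) (by omega) (h₁.infix hvw)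
    (by rw [hvlen, Nat.sub_sub_sub_cancel_right hkj]; exact h₂.infix hvw)
  have hsplit : w = (w.take k ++ v.take (j - k)) ++ (v.drop (j - k) ++ w.drop K) := by
    rw [append_assoc, ← append_assoc (v.take _), take_append_drop, ← append_assoc]
    exact hv
  have hlen : (w.take k ++ v.take (j - k)).length = j := by
    simp only [length_append, length_take, hvlen]; omega
  refine ⟨a, b, ?_, ?_⟩
  · rw [← ha, ← take_left' (l₂ := v.drop (j - k) ++ w.drop K) hlen, ← hsplit]
  · rw [← hb, ← drop_left' (l₂ := v.drop (j - k) ++ w.drop K) hlen, ← hsplit]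

end List

theorem InStar.append {A : Type*} {B : Finset (List A)} {u v : List A} (hu : InStar B u)
    (hv : InStar B v) : InStar B (u ++ v) := by
  obtain ⟨l, hl, rfl⟩ := hu
  obtain ⟨m, hm, rfl⟩ := hv
  exact ⟨l ++ m, fun x hx => (List.mem_append.mp hx).elim (hl x) (hm x), List.flatten_append⟩

theorem inStar_of_mem {A : Type*} {B : Finset (List A)} {u : List A} (h : u ∈ B) :
    InStar B u :=
  ⟨[u], fun _ hx => List.eq_of_mem_singleton hx ▸ h, List.flatten_singleton⟩

theorem inStar_flatten_replicate {A : Type*} {B : Finset (List A)} {u : List A} (h : u ∈ B)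
    (n : ℕ) : InStar B (List.replicate n u).flatten :=
  ⟨List.replicate n u, fun _ hx => List.eq_of_mem_replicate hx ▸ h, rfl⟩

theorem exists_generating_set_card_le_three_general {A : Type*}
    (p : ℕ) (hp : 1 ≤ p) (s t : Fin p → List A) (w S T : List A)
    (hw : ∀ i, w = s i ++ t i)
    (hsuf : ∀ i, (s i).IsSuffix S) (hpre : ∀ i, (t i).IsPrefix T) :
    ∃ B : Finset (List A), B.card ≤ 3 ∧
      ∀ i, InStar B (s i) ∧ InStar B (t i) := by
  classical
  have : Nonempty (Fin p) := ⟨⟨0, hp⟩⟩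
  obtain ⟨i₀, hi₀⟩ := Finite.exists_min fun i => (s i).length
  obtain ⟨i₁, hi₁⟩ := Finite.exists_max fun i => (s i).length
  have hper {i j} (h : (s i).length ≤ (s j).length) :=
    List.hasPeriod_sub_length_of_isSuffix_of_isPrefix (hsuf i) (hsuf j) (hpre i) (hpre j)
      (hw i) (hw j) h
  have hK : (s i₁).length ≤ w.length := by rw [hw i₁, List.length_append]; omega
  obtain ⟨ρ, hρ⟩ := w.exists_forall_take_drop_eq (hi₀ i₁) hK
  refine ⟨{w.take (s i₀).length, ρ, w.drop (s i₁).length}, Finset.card_le_three, fun i => ?_⟩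
  obtain ⟨a, b, ha, hb⟩ := hρ _ (hi₀ i) (hi₁ i) (hper (hi₀ i)) (hper (hi₁ i))
  have hs : s i = w.take (s i).length := by rw [hw i, List.take_left]
  have ht : t i = w.drop (s i).length := by rw [hw i, List.drop_left]
  rw [hs, ht, ha, hb]
  exact ⟨(inStar_of_mem (by simp)).append (inStar_flatten_replicate (by simp) a),
    (inStar_flatten_replicate (by simp) b).append (inStar_of_mem (by simp))⟩

/-- Let `A` be a finite alphabet and `p ≥ 1`. Let `s 1, …, s p, t 1, …, t p`
and `w` be words over `A` with `w = s i ++ t i` for every `i`. Suppose there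
are words `S` and `T` with `|S| ≥ |w|` and `|T| ≥ |w|` such that every `s i`
is a suffix of `S` and every `t i` is a prefix of `T`. Then there is a set of
words `B` of cardinality at most `3` such that every `s i` and every `t i`
is a concatenation of elements of `B`. -/
theorem exists_generating_set_card_le_three {A : Type*} [Fintype A]
    (p : ℕ) (hp : 1 ≤ p) (s t : Fin p → List A) (w S T : List A)
    (hw : ∀ i, w = s i ++ t i)
    (hS : w.length ≤ S.length) (hT : w.length ≤ T.length)
    (hsuf : ∀ i, (s i).IsSuffix S) (hpre : ∀ i, (t i).IsPrefix T) :
    ∃ B : Finset (List A), B.card ≤ 3 ∧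
      ∀ i, InStar B (s i) ∧ InStar B (t i) :=
  exists_generating_set_card_le_three_general p hp s t w S T hw hsuf hpre
end

section
/- Let A be a finite alphabet and p ≥ 2 a natural number. Let s_1, …, s_p, t_1, …, t_p, and w be nonempty words over A with w = s_1 t_1 = s_2 t_2 = ⋯ = s_p t_p and |s_1| > |s_2| > ⋯ > |s_p|. Suppose there are words s and t over A with |s| ≥ |w| and |t| ≥ |w| such that each s_i is a suffix of s and each t_i is a prefix of t. Then w is periodic with period gcd(|s_1| − |s_2|, |s_2| − |s_3|, …, |s_{p−1}| − |s_p|). -/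
/-!
Consecutive splittings `w = s i ++ t i = s (i+1) ++ t (i+1)` give `w` the period
`d i = |s i| - |s (i+1)|`: below position `|s (i+1)|` both letters are read off the common
suffix-word `S`, above it off the common prefix-word `T`. The periods `d i` telescope to at most
`|s 0| ≤ |w|`, so the weak Fine–Wilf theorem (periods `a`, `b` with `a + b ≤ |w|` give period
`gcd a b`) combines them one at a time into their gcd.
-/

namespace IsPeriodicWith

variable {A : Type*} {w : List A}

theorem zero (w : List A) : IsPeriodicWith w 0 := fun _ _ => rfl

/-- The case `i + b ≥ |w|` is where `a + b ≤ |w|` is needed: it forces `i ≥ a`, so one can step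
back by `a` before stepping forward by `b`. -/
theorem tsub {a b : ℕ} (ha : IsPeriodicWith w a) (hb : IsPeriodicWith w b)
    (hab : a ≤ b) (hlen : a + b ≤ w.length) : IsPeriodicWith w (b - a) := by
  intro i hi
  show w[i] = w[i + (b - a)]
  by_cases hib : i + b < w.length
  · have hfwd : w[i] = w[i + b] := hb i hib
    have hback : w[i + (b - a)] = w[i + (b - a) + a] := ha (i + (b - a)) (by omega)
    rw [hfwd, hback]
    exact getElem_congr_idx (by omega)
  · have hback : w[i - a] = w[i - a + a] := ha (i - a) (by omega)
    have hfwd : w[i - a] = w[i - a + b] := hb (i - a) (by omega)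
    rw [getElem_congr_idx (show i = i - a + a by omega), ← hback, hfwd]
    exact getElem_congr_idx (by omega)

/-- Weak form of the Fine–Wilf theorem, proved by running the subtractive Euclidean algorithm
on the periods. -/
theorem gcd {a b : ℕ} (ha : IsPeriodicWith w a) (hb : IsPeriodicWith w b)
    (hlen : a + b ≤ w.length) : IsPeriodicWith w (Nat.gcd a b) := by
  induction hn : a + b using Nat.strong_induction_on generalizing a b with
  | _ n ih =>
    rcases Nat.eq_zero_or_pos a with rfl | ha0
    · simpa using hb
    rcases Nat.eq_zero_or_pos b with rfl | hb0
    · simpa using ha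
    rcases le_total a b with hab | hba
    · rw [← Nat.gcd_sub_self_right hab]
      exact ih (a + (b - a)) (by omega) ha (ha.tsub hb hab hlen) (by omega) rfl
    · rw [← Nat.gcd_sub_self_left hba]
      exact ih (a - b + b) (by omega) (hb.tsub ha hba (by omega)) hb (by omega) rfl

theorem finset_gcd {ι : Type*} {s : Finset ι} {d : ι → ℕ}
    (hper : ∀ i ∈ s, IsPeriodicWith w (d i)) (hsum : ∑ i ∈ s, d i ≤ w.length) :
    IsPeriodicWith w (s.gcd d) := by
  classical
  induction s using Finset.induction_on with
  | empty => exact zero w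
  | insert j s hj ih =>
    rw [Finset.sum_insert hj] at hsum
    rw [Finset.gcd_insert]
    have hgcd_le : s.gcd d ≤ ∑ i ∈ s, d i := by
      rcases Nat.eq_zero_or_pos (∑ i ∈ s, d i) with hzero | hpos
      · have := Finset.gcd_eq_zero_iff.mpr fun i hi => Finset.sum_eq_zero_iff.mp hzero i hi
        omega
      · exact Nat.le_of_dvd hpos (Finset.dvd_sum fun i hi => Finset.gcd_dvd hi)
    exact (hper j (s.mem_insert_self j)).gcd
      (ih (fun i hi => hper i (Finset.mem_insert_of_mem hi)) (by omega)) (by omega)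

end IsPeriodicWith

section Splittings

variable {A : Type*} {u v w S T : List A}

theorem getElem_eq_of_eq_append_of_isSuffix (hw : w = u ++ v) (hu : u <:+ S) {i : ℕ}
    (hi : i < u.length) :
    w[i]'(by simp [hw]; omega) = S[S.length - u.length + i]'(by have := hu.length_le; omega) := by
  simp only [hw, List.getElem_append_left hi, hu.getElem hi]

theorem getElem_eq_of_eq_append_of_isPrefix (hw : w = u ++ v) (hv : v <+: T) {i : ℕ}
    (hui : u.length ≤ i) (hi : i < w.length) :
    w[i] = T[i - u.length]'(by have := hv.length_le; simp [hw] at hi; omega) := by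
  have hiv : i - u.length < v.length := by simp [hw] at hi; omega
  simp only [hw, List.getElem_append_right hui, hv.getElem hiv]

theorem isPeriodicWith_of_splittings {u' v' : List A} (hw : w = u ++ v) (hw' : w = u' ++ v')
    (hu : u <:+ S) (hu' : u' <:+ S) (hv : v <+: T) (hv' : v' <+: T)
    (hlen : u.length ≤ u'.length) : IsPeriodicWith w (u'.length - u.length) := by
  intro i hi
  show w[i] = w[i + (u'.length - u.length)]
  by_cases hiu : i < u.length
  · rw [getElem_eq_of_eq_append_of_isSuffix hw hu hiu,
      getElem_eq_of_eq_append_of_isSuffix hw' hu' (by omega)]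
    have := hu'.length_le
    exact getElem_congr_idx (by omega)
  · rw [getElem_eq_of_eq_append_of_isPrefix hw hv (by omega),
      getElem_eq_of_eq_append_of_isPrefix hw' hv' (by omega)]
    exact getElem_congr_idx (by omega)

end Splittings

theorem Finset.sum_range_tsub_le {f : ℕ → ℕ} {n : ℕ} (hf : ∀ i < n, f (i + 1) ≤ f i) :
    ∑ i ∈ Finset.range n, (f i - f (i + 1)) ≤ f 0 := by
  suffices ∑ i ∈ Finset.range n, (f i - f (i + 1)) + f n = f 0 by omega
  induction n with
  | zero => simp
  | succ n ih =>
    rw [Finset.sum_range_succ, ← ih fun i hi => hf i (by omega)]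
    have := hf n (by omega)
    omega

theorem periodic_with_gcd_of_splittings_general {A : Type*}
    (p : ℕ) (hp : 2 ≤ p) (s t : ℕ → List A) (w S T : List A)
    (hsplit : ∀ i < p, w = s i ++ t i)
    (hdec : ∀ i, i + 1 < p → (s (i + 1)).length < (s i).length)
    (hsuf : ∀ i < p, (s i).IsSuffix S) (hpre : ∀ i < p, (t i).IsPrefix T) :
    IsPeriodicWith w
      ((Finset.range (p - 1)).gcd
        (fun i => (s i).length - (s (i + 1)).length)) := by
  refine IsPeriodicWith.finset_gcd (fun i hi => ?_) ?_
  · have hi : i + 1 < p := by rw [Finset.mem_range] at hi; omega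
    exact isPeriodicWith_of_splittings (hsplit (i + 1) hi) (hsplit i (by omega))
      (hsuf (i + 1) hi) (hsuf i (by omega)) (hpre (i + 1) hi) (hpre i (by omega)) (hdec i hi).le
  · calc ∑ i ∈ Finset.range (p - 1), ((s i).length - (s (i + 1)).length)
        ≤ (s 0).length := Finset.sum_range_tsub_le fun i hi => (hdec i (by omega)).le
      _ ≤ w.length := by simp [hsplit 0 (by omega)]

/-- Let `A` be a finite alphabet and `p ≥ 2`. Let `s 0, …, s (p-1)`,
`t 0, …, t (p-1)` and `w` be nonempty words over `A` with `w = s i ++ t i`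
for every `i < p` and `|s 0| > |s 1| > ⋯ > |s (p-1)|`. Suppose there are
words `S` and `T` with `|S| ≥ |w|`, `|T| ≥ |w|`, each `s i` a suffix of `S`
and each `t i` a prefix of `T`. Then `w` is periodic with period
`gcd (|s 0| − |s 1|, …, |s (p-2)| − |s (p-1)|)`. -/
theorem periodic_with_gcd_of_splittings {A : Type*} [Fintype A]
    (p : ℕ) (hp : 2 ≤ p) (s t : ℕ → List A) (w S T : List A)
    (hwne : w ≠ [])
    (hsne : ∀ i < p, s i ≠ []) (htne : ∀ i < p, t i ≠ [])
    (hsplit : ∀ i < p, w = s i ++ t i)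
    (hdec : ∀ i, i + 1 < p → (s (i + 1)).length < (s i).length)
    (hS : w.length ≤ S.length) (hT : w.length ≤ T.length)
    (hsuf : ∀ i < p, (s i).IsSuffix S) (hpre : ∀ i < p, (t i).IsPrefix T) :
    IsPeriodicWith w
      ((Finset.range (p - 1)).gcd
        (fun i => (s i).length - (s (i + 1)).length)) :=
  periodic_with_gcd_of_splittings_general p hp s t w S T hsplit hdec hsuf hpre
end
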